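/- Fix d ≥ 1. Let Ω ⊂ ℝ^d be a compact convex set with nonempty interior, and let P be the Borel probability measure with density p, where p is continuous and strictly positive on Ω and vanishes outside Ω. Let Z_1, Z_2, … be i.i.d. with law P, and let y be an interior point of Ω. Then lim_{n→∞} n^{2/d} · E[ min_{1≤j≤n} ‖y − Z_j‖² ] = Γ(1 + 2/d) · ( p(y) · V_d )^{−2/d}. -/

import Mathlib

/-!
By the layer-cake formula and independence, `E[min_{j<n} ‖y - Z_j‖²] = ∫₀^∞ G(t)^n dt` with
`G(t) = P(‖y - Z‖² > t) = 1 - F(t)`. Continuity of `p` at `y` gives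
`F(t) ~ p(y) V_d t^{d/2}` as `t → 0⁺`. After the substitution `t = n^{-2/d} s` the integrand
`(1 - F(n^{-2/d} s))^n` tends to `exp(-p(y) V_d s^{d/2})`, and since `P` has bounded support it
is dominated by some `exp(-κ s^{d/2})`; dominated convergence and
`∫₀^∞ exp(-a s^k) ds = a^{-1/k} Γ(1/k + 1)` at `k = d/2` give the limit.
-/

open MeasureTheory

/-- `V_d = π^{d/2} / Γ(d/2 + 1)`, the volume of the Euclidean unit ball in `ℝ^d`. -/
noncomputable def ballVol (d : ℕ) : ℝ :=
  Real.pi ^ ((d : ℝ) / 2) / Real.Gamma ((d : ℝ) / 2 + 1)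

open Filter Set Metric Topology ProbabilityTheory

lemma one_sub_pow_le_exp_neg_mul {c : ℝ} (hc : c ≤ 1) (n : ℕ) :
    (1 - c) ^ n ≤ Real.exp (-(n * c)) :=
  calc (1 - c) ^ n ≤ Real.exp (-c) ^ n :=
        pow_le_pow_left₀ (by linarith) (by linarith [Real.add_one_le_exp (-c)]) n
    _ = Real.exp (-(n * c)) := by rw [← Real.exp_nat_mul]; ring_nf

lemma mul_inv_rpow_one_div_mul_rpow {x k s : ℝ} (hx : 0 < x) (hk : k ≠ 0) (hs : 0 ≤ s) :
    x * ((x ^ (1 / k))⁻¹ * s) ^ k = s ^ k := by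
  rw [Real.mul_rpow (by positivity) hs, Real.inv_rpow (by positivity), ← Real.rpow_mul hx.le,
    one_div_mul_cancel hk, Real.rpow_one]
  field_simp

lemma lintegral_comp_mul_left_Ioi {g : ℝ → ENNReal} (hg : Measurable g) {b : ℝ} (hb : 0 < b) :
    ∫⁻ x in Ioi 0, g (b * x) = ENNReal.ofReal b⁻¹ * ∫⁻ x in Ioi 0, g x := by
  have hpre : (b * ·) ⁻¹' Ioi 0 = Ioi (0 : ℝ) := by
    ext x; simp [mul_pos_iff_of_pos_left hb]
  have hmap : (volume.restrict (Ioi (0 : ℝ))).map (b * ·) =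
      ENNReal.ofReal b⁻¹ • volume.restrict (Ioi 0) := by
    conv_lhs => rw [← hpre]
    rw [← Measure.restrict_map (measurable_const_mul b) measurableSet_Ioi,
      Real.map_volume_mul_left hb.ne', Measure.restrict_smul, abs_of_pos (inv_pos.mpr hb)]
  rw [← lintegral_map hg (measurable_const_mul b), hmap, lintegral_smul_measure, smul_eq_mul]

lemma lintegral_exp_neg_mul_rpow {p b : ℝ} (hp : 0 < p) (hb : 0 < b) :
    ∫⁻ x in Ioi 0, ENNReal.ofReal (Real.exp (-b * x ^ p)) =
      ENNReal.ofReal (b ^ (-1 / p) * Real.Gamma (1 / p + 1)) := by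
  have hint : IntegrableOn (fun x : ℝ => Real.exp (-b * x ^ p)) (Ioi 0) := by
    simpa using integrableOn_rpow_mul_exp_neg_mul_rpow neg_one_lt_zero hp hb
  rw [← integral_exp_neg_mul_rpow hp hb,
    ofReal_integral_eq_lintegral_ofReal hint (ae_of_all _ fun _ => (Real.exp_pos _).le)]

theorem lintegral_ofReal_iInf_eq_lintegral_meas_lt_pow {Ω E ι : Type*} [MeasurableSpace Ω]
    [MeasurableSpace E] [Fintype ι] [Nonempty ι] {μ : Measure Ω} {ν : Measure E}
    {X : ι → Ω → E} (hX : ∀ i, Measurable (X i)) (hlaw : ∀ i, μ.map (X i) = ν)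
    (hindep : iIndepFun X μ) {f : E → ℝ} (hf : Measurable f) (hf₀ : ∀ x, 0 ≤ f x) :
    ∫⁻ ω, ENNReal.ofReal (⨅ i, f (X i ω)) ∂μ =
      ∫⁻ t in Ioi 0, ν {x | t < f x} ^ Fintype.card ι := by
  rw [lintegral_eq_lintegral_meas_lt μ (ae_of_all _ fun ω => le_ciInf fun i => hf₀ _)
    (Measurable.iInf fun i => hf.comp (hX i)).aemeasurable]
  refine setLIntegral_congr_fun measurableSet_Ioi fun t _ => ?_
  have hset : {ω | t < ⨅ i, f (X i ω)} = ⋂ i, X i ⁻¹' {x | t < f x} := by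
    ext ω
    simp only [mem_ofPred_eq, mem_iInter, mem_preimage]
    refine ⟨fun h i => h.trans_le (ciInf_le (Finite.bddBelow_range _) i), fun h => ?_⟩
    obtain ⟨i, hi⟩ := exists_eq_ciInf_of_finite (f := fun i => f (X i ω))
    exact hi ▸ h i
  rw [hset, hindep.meas_iInter fun i => ⟨_, measurableSet_lt measurable_const hf, rfl⟩]
  simp_rw [← Measure.map_apply (hX _) (measurableSet_lt measurable_const hf), hlaw,
    Finset.prod_const, Finset.card_univ]

section ScaledMinimum

variable {α : Type*} [MeasurableSpace α] {μ : Measure α} [IsProbabilityMeasure μ] {f : α → ℝ}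

lemma measure_lt_eq_ofReal_one_sub (hf : Measurable f) (t : ℝ) :
    μ {x | t < f x} = ENNReal.ofReal (1 - μ.real {x | f x ≤ t}) := by
  rw [show {x | t < f x} = {x | f x ≤ t}ᶜ by ext; simp,
    prob_compl_eq_one_sub (measurableSet_le hf measurable_const),
    ENNReal.ofReal_sub _ measureReal_nonneg, ENNReal.ofReal_one, ofReal_measureReal]

lemma exists_pos_mul_rpow_le_measureReal_le {k a M : ℝ} (hk : 0 ≤ k) (ha : 0 < a) (hM : 0 < M)
    (hF : Tendsto (fun t => μ.real {x | f x ≤ t} / t ^ k) (𝓝[>] 0) (𝓝 a)) :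
    ∃ κ > 0, ∀ t, 0 < t → t ≤ M → κ * t ^ k ≤ μ.real {x | f x ≤ t} := by
  have hmono : Monotone fun t => μ.real {x | f x ≤ t} := fun s t hst =>
    measureReal_mono fun x hx => le_trans hx hst
  obtain ⟨t₀, ht₀, hsmall⟩ :=
    mem_nhdsGT_iff_exists_Ioc_subset.1 (hF.eventually (lt_mem_nhds (half_lt_self ha)))
  set t₁ := min t₀ M
  have ht₁ : 0 < t₁ := lt_min ht₀ hM
  have hnear : ∀ t, 0 < t → t ≤ t₁ → a / 2 * t ^ k ≤ μ.real {x | f x ≤ t} :=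
    fun t ht htt₁ => ((lt_div_iff₀ (by positivity)).1
      (hsmall ⟨ht, htt₁.trans (min_le_left _ _)⟩)).le
  have hMk : 0 < M ^ k := by positivity
  -- On `(0, t₁]` the bound comes from the limit, on `[t₁, M]` from monotonicity in `t`.
  refine ⟨a / 2 * t₁ ^ k / M ^ k, by positivity, fun t ht htM => ?_⟩
  rcases le_total t t₁ with h | h
  · have : t₁ ^ k ≤ M ^ k := Real.rpow_le_rpow ht₁.le (min_le_right _ _) hk
    calc a / 2 * t₁ ^ k / M ^ k * t ^ k ≤ a / 2 * t ^ k := by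
          rw [div_mul_eq_mul_div, div_le_iff₀ hMk]
          nlinarith [mul_le_mul_of_nonneg_left this (by positivity : 0 ≤ a / 2 * t ^ k)]
      _ ≤ _ := hnear t ht h
  · have : t ^ k ≤ M ^ k := Real.rpow_le_rpow ht.le htM hk
    calc a / 2 * t₁ ^ k / M ^ k * t ^ k ≤ a / 2 * t₁ ^ k := by
          rw [div_mul_eq_mul_div, div_le_iff₀ hMk]
          nlinarith [mul_le_mul_of_nonneg_left this (by positivity : 0 ≤ a / 2 * t₁ ^ k)]
      _ ≤ μ.real {x | f x ≤ t₁} := hnear t₁ ht₁ le_rfl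
      _ ≤ _ := hmono h

lemma tendsto_measure_lt_inv_rpow_mul_pow (hf : Measurable f) {k a : ℝ} (hk : 0 < k)
    (hF : Tendsto (fun t => μ.real {x | f x ≤ t} / t ^ k) (𝓝[>] 0) (𝓝 a)) {s : ℝ}
    (hs : 0 < s) :
    Tendsto (fun n : ℕ => μ {x | ((n : ℝ) ^ (1 / k))⁻¹ * s < f x} ^ n) atTop
      (𝓝 (ENNReal.ofReal (Real.exp (-a * s ^ k)))) := by
  set τ : ℕ → ℝ := fun n => ((n : ℝ) ^ (1 / k))⁻¹ * s
  have hτ : Tendsto τ atTop (𝓝[>] 0) := by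
    refine tendsto_nhdsWithin_iff.2 ⟨?_, ?_⟩
    · simpa using ((tendsto_rpow_atTop (by positivity)).comp
        tendsto_natCast_atTop_atTop).inv_tendsto_atTop.mul_const s
    · filter_upwards [eventually_gt_atTop 0] with n hn
      exact mul_pos (inv_pos.2 (by positivity)) hs
  have hmass : Tendsto (fun n : ℕ => n * -μ.real {x | f x ≤ τ n}) atTop
      (𝓝 (-a * s ^ k)) := by
    refine ((hF.comp hτ).neg.mul_const (s ^ k)).congr' ?_
    filter_upwards [eventually_gt_atTop 0] with n hn
    have hτn : 0 < τ n := mul_pos (inv_pos.2 (by positivity)) hs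
    have hscale : (n : ℝ) * τ n ^ k = s ^ k :=
      mul_inv_rpow_one_div_mul_rpow (Nat.cast_pos.2 hn) hk.ne' hs.le
    rw [Function.comp_apply, ← hscale]
    field_simp
  refine ((ENNReal.continuous_ofReal.tendsto _).comp
    (Real.tendsto_one_add_pow_exp_of_tendsto hmass)).congr fun n => ?_
  rw [Function.comp_apply, measure_lt_eq_ofReal_one_sub hf,
    ← ENNReal.ofReal_pow (sub_nonneg.2 measureReal_le_one),
    sub_eq_add_neg]

lemma measure_lt_inv_rpow_mul_pow_le (hf : Measurable f) {k M κ : ℝ} (hk : 0 < k)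
    (hfM : ∀ᵐ x ∂μ, f x ≤ M)
    (hκ : ∀ t, 0 < t → t ≤ M → κ * t ^ k ≤ μ.real {x | f x ≤ t}) {n : ℕ} (hn : n ≠ 0)
    {s : ℝ} (hs : 0 < s) :
    μ {x | ((n : ℝ) ^ (1 / k))⁻¹ * s < f x} ^ n ≤ ENNReal.ofReal (Real.exp (-κ * s ^ k)) := by
  set τ := ((n : ℝ) ^ (1 / k))⁻¹ * s
  have hτ : 0 < τ := mul_pos (inv_pos.2 (by positivity)) hs
  rcases lt_or_ge M τ with hMτ | hτM
  · have : μ {x | τ < f x} = 0 :=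
      measure_mono_null (fun x hx => not_le.2 (hMτ.trans hx)) (ae_iff.1 hfM)
    simp [this, hn]
  rw [measure_lt_eq_ofReal_one_sub hf,
    ← ENNReal.ofReal_pow (sub_nonneg.2 measureReal_le_one)]
  refine ENNReal.ofReal_le_ofReal ((one_sub_pow_le_exp_neg_mul measureReal_le_one n).trans ?_)
  rw [Real.exp_le_exp, neg_mul, neg_le_neg_iff,
    ← mul_inv_rpow_one_div_mul_rpow (Nat.cast_pos.2 (Nat.pos_of_ne_zero hn)) hk.ne' hs.le]
  have := mul_le_mul_of_nonneg_left (hκ τ hτ hτM) (Nat.cast_nonneg (α := ℝ) n)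
  linarith

theorem tendsto_rpow_mul_lintegral_measure_lt_pow (hf : Measurable f) {k a M : ℝ} (hk : 0 < k)
    (ha : 0 < a) (hfM : ∀ᵐ x ∂μ, f x ≤ M)
    (hF : Tendsto (fun t => μ.real {x | f x ≤ t} / t ^ k) (𝓝[>] 0) (𝓝 a)) :
    Tendsto (fun n : ℕ => (n : ℝ) ^ (1 / k) * (∫⁻ t in Ioi 0, μ {x | t < f x} ^ n).toReal) atTop
      (𝓝 (a ^ (-1 / k) * Real.Gamma (1 / k + 1))) := by
  obtain ⟨κ, hκ, hκF⟩ := exists_pos_mul_rpow_le_measureReal_le hk.le ha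
    (lt_max_of_lt_right one_pos : (0 : ℝ) < max M 1) hF
  have hfM' : ∀ᵐ x ∂μ, f x ≤ max M 1 := hfM.mono fun x hx => hx.trans (le_max_left _ _)
  have hG : Measurable fun t => μ {x | t < f x} :=
    Antitone.measurable fun s t hst => measure_mono fun x hx => hst.trans_lt hx
  have hlim : Tendsto (fun n : ℕ => ∫⁻ s in Ioi 0, μ {x | ((n : ℝ) ^ (1 / k))⁻¹ * s < f x} ^ n)
      atTop (𝓝 (∫⁻ s in Ioi 0, ENNReal.ofReal (Real.exp (-a * s ^ k)))) := by
    refine tendsto_lintegral_filter_of_dominated_convergence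
      (fun s => ENNReal.ofReal (Real.exp (-κ * s ^ k)))
      (Eventually.of_forall fun n => (hG.comp (measurable_const_mul _)).pow_const n) ?_ ?_ ?_
    · filter_upwards [eventually_ne_atTop 0] with n hn
      refine (ae_restrict_iff' measurableSet_Ioi).2 (ae_of_all _ fun s hs => ?_)
      exact measure_lt_inv_rpow_mul_pow_le hf hk hfM' hκF hn hs
    · rw [lintegral_exp_neg_mul_rpow hk hκ]
      exact ENNReal.ofReal_ne_top
    · refine (ae_restrict_iff' measurableSet_Ioi).2 (ae_of_all _ fun s hs => ?_)
      exact tendsto_measure_lt_inv_rpow_mul_pow hf hk hF hs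
  rw [lintegral_exp_neg_mul_rpow hk ha] at hlim
  have hlim' := (ENNReal.tendsto_toReal ENNReal.ofReal_ne_top).comp hlim
  rw [ENNReal.toReal_ofReal (by positivity)] at hlim'
  refine hlim'.congr' ?_
  filter_upwards [eventually_ne_atTop 0] with n hn
  rw [Function.comp_apply, lintegral_comp_mul_left_Ioi (g := fun t => μ {x | t < f x} ^ n)
    (hG.pow_const n) (by positivity), inv_inv, ENNReal.toReal_mul,
    ENNReal.toReal_ofReal (by positivity)]

end ScaledMinimum

theorem tendsto_withDensity_closedBall_div_measure {α : Type*} [PseudoMetricSpace α]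
    [ProperSpace α] [MeasurableSpace α] [OpensMeasurableSpace α] (μ : Measure α)
    [IsFiniteMeasureOnCompacts μ] [μ.IsOpenPosMeasure] {p : α → ℝ} {y : α}
    (hp : ContinuousAt p y) (hpy : 0 ≤ p y) :
    Tendsto (fun r => (μ.withDensity fun x => ENNReal.ofReal (p x)).real (closedBall y r) /
      μ.real (closedBall y r)) (𝓝[>] 0) (𝓝 (p y)) := by
  set ν := μ.withDensity fun x => ENNReal.ofReal (p x)
  refine Metric.tendsto_nhds.2 fun ε hε => ?_
  have hnear : ∀ᶠ r in 𝓝[>] 0, 0 < r ∧ closedBall y r ⊆ {x | |p x - p y| ≤ ε / 2} :=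
    eventually_mem_nhdsWithin.and <| nhdsWithin_le_nhds <| eventually_closedBall_subset <|
      (Metric.continuousAt_iff'.1 hp (ε / 2) (half_pos hε)).mono fun x hx => by
        rw [Real.dist_eq] at hx; exact hx.le
  filter_upwards [hnear] with r ⟨hr, hball⟩
  set B := closedBall y r
  have hμB : μ B ≠ ⊤ := measure_closedBall_lt_top.ne
  have hB : 0 < μ.real B :=
    ENNReal.toReal_pos (measure_closedBall_pos μ y hr).ne' hμB
  have hclose : ∀ x ∈ B, |p x - p y| ≤ ε / 2 := fun x hx => hball hx
  have hνB : ν B = ∫⁻ x in B, ENNReal.ofReal (p x) ∂μ :=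
    withDensity_apply _ measurableSet_closedBall
  have hup : ν B ≤ ENNReal.ofReal ((p y + ε / 2) * μ.real B) := by
    rw [ENNReal.ofReal_mul' measureReal_nonneg, ofReal_measureReal hμB, hνB, ← setLIntegral_const]
    exact setLIntegral_mono' measurableSet_closedBall fun x hx =>
      ENNReal.ofReal_le_ofReal (by linarith [(abs_le.1 (hclose x hx)).2])
  have hlow : ENNReal.ofReal ((p y - ε / 2) * μ.real B) ≤ ν B := by
    rw [ENNReal.ofReal_mul' measureReal_nonneg, ofReal_measureReal hμB, hνB, ← setLIntegral_const]
    exact setLIntegral_mono' measurableSet_closedBall fun x hx =>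
      ENNReal.ofReal_le_ofReal (by linarith [(abs_le.1 (hclose x hx)).1])
  have hup' : ν.real B / μ.real B ≤ p y + ε / 2 :=
    (div_le_iff₀ hB).2 (ENNReal.toReal_le_of_le_ofReal (by positivity) hup)
  have hlow' : p y - ε / 2 ≤ ν.real B / μ.real B :=
    (le_div_iff₀ hB).2 ((ENNReal.ofReal_le_iff_le_toReal
      (ne_top_of_le_ne_top ENNReal.ofReal_ne_top hup)).1 hlow)
  rw [Real.dist_eq, abs_sub_lt_iff]
  constructor <;> linarith

lemma withDensity_ofReal_compl_eq_zero {α : Type*} [MeasurableSpace α] (μ : Measure α)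
    {p : α → ℝ} {s : Set α} (hs : MeasurableSet s) (hp : ∀ x ∉ s, p x = 0) :
    μ.withDensity (fun x => ENNReal.ofReal (p x)) sᶜ = 0 := by
  rw [withDensity_apply _ hs.compl]
  exact setLIntegral_eq_zero hs.compl fun x hx => by simp [hp x hx]

lemma ballVol_pos (d : ℕ) : 0 < ballVol d :=
  div_pos (Real.rpow_pos_of_pos Real.pi_pos _) (Real.Gamma_pos_of_pos (by positivity))

lemma EuclideanSpace.volume_real_closedBall_fin {d : ℕ} (hd : 0 < d)
    (y : EuclideanSpace ℝ (Fin d)) {r : ℝ} (hr : 0 ≤ r) :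
    volume.real (closedBall y r) = r ^ d * ballVol d := by
  have : Nonempty (Fin d) := Fin.pos_iff_nonempty.1 hd
  rw [measureReal_def, EuclideanSpace.volume_closedBall, Fintype.card_fin, ENNReal.toReal_mul,
    ENNReal.toReal_pow, ENNReal.toReal_ofReal hr, ENNReal.toReal_ofReal (by positivity),
    ballVol, Real.sqrt_eq_rpow, ← Real.rpow_natCast (Real.pi ^ (1 / 2 : ℝ)) d,
    ← Real.rpow_mul Real.pi_pos.le]
  ring_nf

theorem tendsto_withDensity_closedBall_div_pow {d : ℕ} (hd : 0 < d)
    {p : EuclideanSpace ℝ (Fin d) → ℝ} {y : EuclideanSpace ℝ (Fin d)} (hp : ContinuousAt p y)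
    (hpy : 0 ≤ p y) :
    Tendsto (fun r => (volume.withDensity fun x => ENNReal.ofReal (p x)).real (closedBall y r) /
      r ^ d) (𝓝[>] 0) (𝓝 (p y * ballVol d)) := by
  refine ((tendsto_withDensity_closedBall_div_measure volume hp hpy).mul_const _).congr' ?_
  filter_upwards [eventually_mem_nhdsWithin] with r (hr : 0 < r)
  rw [EuclideanSpace.volume_real_closedBall_fin hd y hr.le]
  field_simp [(ballVol_pos d).ne']

lemma tendsto_measureReal_norm_sub_sq_le_div_rpow {E : Type*} [SeminormedAddCommGroup E]
    [MeasurableSpace E] {μ : Measure E} {y : E} {d : ℕ} {a : ℝ}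
    (h : Tendsto (fun r => μ.real (closedBall y r) / r ^ d) (𝓝[>] 0) (𝓝 a)) :
    Tendsto (fun t => μ.real {z | ‖y - z‖ ^ 2 ≤ t} / t ^ ((d : ℝ) / 2)) (𝓝[>] 0) (𝓝 a) := by
  have hsqrt : Tendsto Real.sqrt (𝓝[>] 0) (𝓝[>] 0) :=
    tendsto_nhdsWithin_iff.2 ⟨(Real.continuous_sqrt.tendsto' 0 0 Real.sqrt_zero).mono_left
      nhdsWithin_le_nhds, eventually_mem_nhdsWithin.mono fun t ht => Real.sqrt_pos.2 ht⟩
  refine (h.comp hsqrt).congr' ?_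
  filter_upwards [eventually_mem_nhdsWithin] with t (ht : 0 < t)
  have hball : closedBall y (Real.sqrt t) = {z | ‖y - z‖ ^ 2 ≤ t} := by
    ext z
    rw [mem_closedBall', dist_eq_norm, Real.le_sqrt (norm_nonneg _) ht.le, mem_ofPred_eq]
  rw [Function.comp_apply, hball, Real.sqrt_eq_rpow, ← Real.rpow_natCast,
    ← Real.rpow_mul ht.le]
  ring_nf

theorem stmt_10_general (d : ℕ) (hd : 1 ≤ d)
    (Ω : Set (EuclideanSpace ℝ (Fin d)))
    (hcomp : IsCompact Ω)
    (p : EuclideanSpace ℝ (Fin d) → ℝ)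
    (hpcont : ContinuousOn p Ω) (hppos : ∀ x ∈ Ω, 0 < p x) (hpzero : ∀ x ∉ Ω, p x = 0)
    (P : Measure (EuclideanSpace ℝ (Fin d)))
    (hP : P = volume.withDensity fun x => ENNReal.ofReal (p x))
    [IsProbabilityMeasure P]
    {Θ : Type*} [MeasurableSpace Θ] (Pr : Measure Θ)
    (Z : ℕ → Θ → EuclideanSpace ℝ (Fin d))
    (hZmeas : ∀ i, Measurable (Z i))
    (hZlaw : ∀ i, Measure.map (Z i) Pr = P)
    (hZindep : ProbabilityTheory.iIndepFun Z Pr)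
    (y : EuclideanSpace ℝ (Fin d)) (hy : y ∈ interior Ω) :
    Filter.Tendsto
      (fun n : ℕ => (n : ℝ) ^ ((2 : ℝ) / d) *
        (∫⁻ θ, ENNReal.ofReal (⨅ j : Fin n, ‖y - Z j θ‖ ^ 2) ∂Pr).toReal)
      Filter.atTop
      (nhds (Real.Gamma (1 + 2 / (d : ℝ)) * (p y * ballVol d) ^ (-(2 : ℝ) / d))) := by
  have hpy : 0 < p y := hppos y (interior_subset hy)
  have hΩ : MeasurableSet Ω := hcomp.isClosed.measurableSet
  have hf : Measurable fun z : EuclideanSpace ℝ (Fin d) => ‖y - z‖ ^ 2 := by fun_prop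
  obtain ⟨D, hD⟩ := hcomp.isBounded.subset_closedBall y
  have hbounded : ∀ᵐ z ∂P, ‖y - z‖ ^ 2 ≤ D ^ 2 := by
    filter_upwards [mem_ae_iff.2 (hP ▸ withDensity_ofReal_compl_eq_zero volume hΩ hpzero)]
      with z hz
    have hzD : ‖y - z‖ ≤ D := by simpa [dist_eq_norm] using mem_closedBall'.1 (hD hz)
    exact pow_le_pow_left₀ (norm_nonneg _) hzD 2
  have hball := tendsto_withDensity_closedBall_div_pow hd
    (hpcont.continuousAt (mem_interior_iff_mem_nhds.1 hy)) hpy.le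
  rw [← hP] at hball
  have hlim := tendsto_rpow_mul_lintegral_measure_lt_pow hf (by positivity)
    (mul_pos hpy (ballVol_pos d)) hbounded (tendsto_measureReal_norm_sub_sq_le_div_rpow hball)
  rw [one_div_div, div_div_eq_mul_div, neg_one_mul, mul_comm, add_comm] at hlim
  refine hlim.congr' ?_
  filter_upwards [eventually_ne_atTop 0] with n hn
  have : Nonempty (Fin n) := Fin.pos_iff_nonempty.1 (Nat.pos_of_ne_zero hn)
  have hmin : ∫⁻ θ, ENNReal.ofReal (⨅ j : Fin n, ‖y - Z j θ‖ ^ 2) ∂Pr =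
      ∫⁻ t in Ioi 0, P {z | t < ‖y - z‖ ^ 2} ^ n := by
    simpa using lintegral_ofReal_iInf_eq_lintegral_meas_lt_pow (X := fun j : Fin n => Z j)
      (fun j => hZmeas j) (fun j => hZlaw j) (hZindep.precomp Fin.val_injective) hf
      (fun _ => sq_nonneg _)
  rw [hmin]

/-- **Local asymptotics of the expected nearest-neighbor squared distance.**
Let `Ω ⊂ ℝ^d` be compact convex with nonempty interior, `p` continuous and strictly
positive on `Ω`, vanishing outside, `Z_1, Z_2, …` i.i.d. with law `P = p · Leb`, and `y`
an interior point of `Ω`. Then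
`lim_{n→∞} n^{2/d} E[min_{1≤j≤n} ‖y − Z_j‖²] = Γ(1 + 2/d) (p(y) V_d)^{−2/d}`. -/
theorem stmt_10 (d : ℕ) (hd : 1 ≤ d)
    (Ω : Set (EuclideanSpace ℝ (Fin d)))
    (hcomp : IsCompact Ω) (hconv : Convex ℝ Ω) (hint : (interior Ω).Nonempty)
    (p : EuclideanSpace ℝ (Fin d) → ℝ)
    (hpcont : ContinuousOn p Ω) (hppos : ∀ x ∈ Ω, 0 < p x) (hpzero : ∀ x ∉ Ω, p x = 0)
    (P : Measure (EuclideanSpace ℝ (Fin d)))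
    (hP : P = volume.withDensity fun x => ENNReal.ofReal (p x))
    [IsProbabilityMeasure P]
    {Θ : Type*} [MeasurableSpace Θ] (Pr : Measure Θ) [IsProbabilityMeasure Pr]
    (Z : ℕ → Θ → EuclideanSpace ℝ (Fin d))
    (hZmeas : ∀ i, Measurable (Z i))
    (hZlaw : ∀ i, Measure.map (Z i) Pr = P)
    (hZindep : ProbabilityTheory.iIndepFun Z Pr)
    (y : EuclideanSpace ℝ (Fin d)) (hy : y ∈ interior Ω) :
    Filter.Tendsto
      (fun n : ℕ => (n : ℝ) ^ ((2 : ℝ) / d) *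
        (∫⁻ θ, ENNReal.ofReal (⨅ j : Fin n, ‖y - Z j θ‖ ^ 2) ∂Pr).toReal)
      Filter.atTop
      (nhds (Real.Gamma (1 + 2 / (d : ℝ)) * (p y * ballVol d) ^ (-(2 : ℝ) / d))) :=
  stmt_10_general d hd Ω hcomp p hpcont hppos hpzero P hP Pr Z hZmeas hZlaw hZindep y hy
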